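/- Let (φ_{j1,j2,j3}) be a family satisfying the genus-two Pieri rule with φ_{0,0,0} = 1. For every admissible triple (j1,j2,j3), set N = (j1+j2+j3)/2, d1 = (−j1+j2+j3)/2, d2 = (j1−j2+j3)/2, d3 = (j1+j2−j3)/2. Then there exists a nonzero constant c ∈ ℂ such that the coefficient of φ_{j1,j2,j3} on the monomial x12^{d3}·x13^{d2}·x23^{d1} equals c, and for every (e1,e2,e3) ∈ ℤ³ with e1+e2+e3 ≥ N and (e1,e2,e3) ≠ (d3,d2,d1), the coefficient of φ_{j1,j2,j3} on x12^{e1}·x13^{e2}·x23^{e3} is zero. -/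

import Mathlib

/-- A triple of integers is *admissible* if all entries are nonnegative,
the triangle inequality `|j1 - j2| ≤ j3 ≤ j1 + j2` holds, and `j1+j2+j3` is even. -/
def Admissible (j : ℤ × ℤ × ℤ) : Prop :=
  0 ≤ j.1 ∧ 0 ≤ j.2.1 ∧ 0 ≤ j.2.2 ∧
  |j.1 - j.2.1| ≤ j.2.2 ∧ j.2.2 ≤ j.1 + j.2.1 ∧ 2 ∣ (j.1 + j.2.1 + j.2.2)

/-- Pieri coefficient `K_{a,b}(j1,j2,j3)` as a complex number. -/
noncomputable def Kc (a b j1 j2 j3 : ℤ) : ℂ :=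
  ((a * b : ℤ) : ℂ) *
    (((a*j1 + b*j2 + j3 + a + b + 2 : ℤ) : ℂ) * ((a*j1 + b*j2 - j3 + a + b : ℤ) : ℂ)) /
    (4 * ((j1 : ℂ) + 1) * ((j2 : ℂ) + 1))

/-- Laurent polynomials in three variables, as finitely supported
coefficient functions on the exponent lattice `ℤ³`.  The coordinates of a
monomial `m` are the exponents of `x12`, `x13`, `x23` respectively. -/
abbrev LP := (ℤ × ℤ × ℤ) →₀ ℂ

/-- Multiplication of a Laurent polynomial by the monomial `x^e`. -/
noncomputable def shiftLP (e : ℤ × ℤ × ℤ) (p : LP) : LP :=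
  Finsupp.mapDomain (fun m => e + m) p

/-- Membership in `H`: invariance under each inversion `x_{ij} ↦ x_{ij}⁻¹`. -/
def InvariantH (p : LP) : Prop :=
  (∀ m : ℤ × ℤ × ℤ, p (-m.1, m.2.1, m.2.2) = p m) ∧
  (∀ m : ℤ × ℤ × ℤ, p (m.1, -m.2.1, m.2.2) = p m) ∧
  (∀ m : ℤ × ℤ × ℤ, p (m.1, m.2.1, -m.2.2) = p m)

/-- A family `φ` (defined for all integer triples, vanishing on non-admissible ones,
with values in `H`) satisfies the genus-two Pieri rule with `φ_{0,0,0} = 1`. -/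
structure IsPieriFamily (φ : ℤ × ℤ × ℤ → LP) : Prop where
  zero_of_not_admissible : ∀ j, ¬ Admissible j → φ j = 0
  mem_H : ∀ j, InvariantH (φ j)
  init : φ (0, 0, 0) = Finsupp.single (0, 0, 0) 1
  pieri12 : ∀ j1 j2 j3 : ℤ, Admissible (j1, j2, j3) →
    shiftLP (1, 0, 0) (φ (j1, j2, j3)) + shiftLP (-1, 0, 0) (φ (j1, j2, j3)) =
      Kc 1 1 j1 j2 j3 • φ (j1+1, j2+1, j3) + Kc 1 (-1) j1 j2 j3 • φ (j1+1, j2-1, j3) +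
      Kc (-1) 1 j1 j2 j3 • φ (j1-1, j2+1, j3) + Kc (-1) (-1) j1 j2 j3 • φ (j1-1, j2-1, j3)
  pieri13 : ∀ j1 j2 j3 : ℤ, Admissible (j1, j2, j3) →
    shiftLP (0, 1, 0) (φ (j1, j2, j3)) + shiftLP (0, -1, 0) (φ (j1, j2, j3)) =
      Kc 1 1 j1 j3 j2 • φ (j1+1, j2, j3+1) + Kc 1 (-1) j1 j3 j2 • φ (j1+1, j2, j3-1) +
      Kc (-1) 1 j1 j3 j2 • φ (j1-1, j2, j3+1) + Kc (-1) (-1) j1 j3 j2 • φ (j1-1, j2, j3-1)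
  pieri23 : ∀ j1 j2 j3 : ℤ, Admissible (j1, j2, j3) →
    shiftLP (0, 0, 1) (φ (j1, j2, j3)) + shiftLP (0, 0, -1) (φ (j1, j2, j3)) =
      Kc 1 1 j2 j3 j1 • φ (j1, j2+1, j3+1) + Kc 1 (-1) j2 j3 j1 • φ (j1, j2+1, j3-1) +
      Kc (-1) 1 j2 j3 j1 • φ (j1, j2-1, j3+1) + Kc (-1) (-1) j2 j3 j1 • φ (j1, j2-1, j3-1)

/-!
Induction on `j1 + j2 + j3`. If, say, `d3 ≥ 1`, apply the `x12`-Pieri rule at the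
admissible triple `(j1-1, j2-1, j3)`. In total degree `≥ N` its left side is
`x12` times the leading monomial of `φ_{j1-1,j2-1,j3}` (which sits in degree `N-1`), while of
the four terms on the right all but `K_{1,1} φ_{j1,j2,j3}` have smaller weight and so vanish
in degree `≥ N`. Since `K_{1,1}` is nonzero at admissible triples, the degree `≥ N` part of
`φ_{j1,j2,j3}` is a nonzero multiple of `x12^{d3} x13^{d2} x23^{d1}`.
-/

def coordSum (e : ℤ × ℤ × ℤ) : ℤ := e.1 + e.2.1 + e.2.2

lemma coordSum_add (e f : ℤ × ℤ × ℤ) : coordSum (e + f) = coordSum e + coordSum f := by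
  simp only [coordSum, Prod.fst_add, Prod.snd_add]; ring

lemma coordSum_sub (e f : ℤ × ℤ × ℤ) : coordSum (e - f) = coordSum e - coordSum f := by
  simp only [coordSum, Prod.fst_sub, Prod.snd_sub]; ring

def HasLeadingTerm (p : LP) (d : ℤ × ℤ × ℤ) : Prop :=
  p d ≠ 0 ∧ ∀ e, coordSum d ≤ coordSum e → e ≠ d → p e = 0

/-- The exponent `(d3, d2, d1)` of the statement. -/
def leadingExp (j : ℤ × ℤ × ℤ) : ℤ × ℤ × ℤ :=
  ((j.1 + j.2.1 - j.2.2) / 2, (j.1 - j.2.1 + j.2.2) / 2, (-j.1 + j.2.1 + j.2.2) / 2)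

lemma admissible_iff (j1 j2 j3 : ℤ) : Admissible (j1, j2, j3) ↔
    0 ≤ j1 ∧ 0 ≤ j2 ∧ 0 ≤ j3 ∧ j1 - j2 ≤ j3 ∧ j2 - j1 ≤ j3 ∧ j3 ≤ j1 + j2 ∧
      2 ∣ j1 + j2 + j3 := by
  simp only [Admissible, abs_le]
  omega

lemma Admissible.two_mul_coordSum_leadingExp {j : ℤ × ℤ × ℤ} (hj : Admissible j) :
    2 * coordSum (leadingExp j) = coordSum j := by
  obtain ⟨j1, j2, j3⟩ := j
  rw [admissible_iff] at hj
  simp only [coordSum, leadingExp]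
  omega

lemma Admissible.coordSum_nonneg {j : ℤ × ℤ × ℤ} (hj : Admissible j) : 0 ≤ coordSum j := by
  obtain ⟨j1, j2, j3⟩ := j
  rw [admissible_iff] at hj
  simp only [coordSum]
  omega

lemma Kc_one_one_ne_zero {a b c : ℤ} (ha : 0 ≤ a) (hb : 0 ≤ b) (hc : 0 ≤ c)
    (hab : c ≤ a + b) : Kc 1 1 a b c ≠ 0 := by
  have hpos : ∀ k : ℤ, 0 < k → (k : ℂ) ≠ 0 := fun k hk => Int.cast_ne_zero.mpr hk.ne'
  unfold Kc
  refine div_ne_zero (mul_ne_zero (by norm_num) (mul_ne_zero (hpos _ ?_) (hpos _ ?_)))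
    (mul_ne_zero (mul_ne_zero (by norm_num) ?_) ?_)
  · omega
  · omega
  · exact_mod_cast hpos (a + 1) (by omega)
  · exact_mod_cast hpos (b + 1) (by omega)

lemma shiftLP_apply (t : ℤ × ℤ × ℤ) (p : LP) (x : ℤ × ℤ × ℤ) :
    shiftLP t p x = p (x - t) := by
  unfold shiftLP
  simpa using Finsupp.mapDomain_apply (add_right_injective t) p (x - t)

lemma HasLeadingTerm.of_shiftLP_add_shiftLP {p q r : LP} {u d : ℤ × ℤ × ℤ} {K : ℂ}
    (hK : K ≠ 0) (hu : coordSum u = 1) (hq : HasLeadingTerm q d)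
    (hr : ∀ e, coordSum d < coordSum e → r e = 0)
    (h : shiftLP u q + shiftLP (-u) q = K • p + r) : HasLeadingTerm p (d + u) := by
  have hcoeff : ∀ e, coordSum d < coordSum e → K * p e = q (e - u) := by
    intro e he
    have he' := congr($h e)
    have hup : q (e + u) = 0 :=
      hq.2 _ (by rw [coordSum_add]; omega) fun h => by rw [← h, coordSum_add] at he; omega
    simp only [Finsupp.add_apply, Finsupp.smul_apply, smul_eq_mul, shiftLP_apply,
      sub_neg_eq_add, hup, hr e he] at he'
    simpa using he'.symm
  have hdu : coordSum d < coordSum (d + u) := by rw [coordSum_add]; omega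
  refine ⟨fun h0 => hq.1 ?_, fun e he hne => ?_⟩
  · simpa [h0] using (hcoeff _ hdu).symm
  · have hlow := hq.2 (e - u) (by rw [coordSum_sub]; omega) fun h => hne (by rw [← h]; abel)
    rw [← hcoeff e (by omega)] at hlow
    exact (mul_eq_zero.mp hlow).resolve_left hK

namespace IsPieriFamily

variable {φ : ℤ × ℤ × ℤ → LP}

lemma apply_eq_zero_of_lt (hφ : IsPieriFamily φ) {j e : ℤ × ℤ × ℤ}
    (hj : Admissible j → HasLeadingTerm (φ j) (leadingExp j))
    (hlt : coordSum j < 2 * coordSum e) : φ j e = 0 := by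
  by_cases hadm : Admissible j
  · have hd := hadm.two_mul_coordSum_leadingExp
    exact (hj hadm).2 e (by omega) fun h => by rw [h] at hlt; omega
  · simp [hφ.zero_of_not_admissible j hadm]

lemma hasLeadingTerm_of_rule (hφ : IsPieriFamily φ) {j j' a b c u : ℤ × ℤ × ℤ}
    {K K₂ K₃ K₄ : ℂ} (hK : K ≠ 0) (hu : coordSum u = 1) (hj' : Admissible j')
    (hexp : leadingExp j = leadingExp j' + u) (hj'j : coordSum j' + 2 = coordSum j)
    (ha : coordSum a < coordSum j) (hb : coordSum b < coordSum j)
    (hc : coordSum c < coordSum j)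
    (ih : ∀ i, coordSum i < coordSum j → Admissible i → HasLeadingTerm (φ i) (leadingExp i))
    (hrule : shiftLP u (φ j') + shiftLP (-u) (φ j') =
      K • φ j + K₂ • φ a + K₃ • φ b + K₄ • φ c) :
    HasLeadingTerm (φ j) (leadingExp j) := by
  have hd := hj'.two_mul_coordSum_leadingExp
  rw [add_assoc, add_assoc] at hrule
  rw [hexp]
  refine .of_shiftLP_add_shiftLP hK hu (ih j' (by omega) hj') (fun e he => ?_) hrule
  have hvan : ∀ i, coordSum i < coordSum j → φ i e = 0 := fun i hi =>
    hφ.apply_eq_zero_of_lt (ih i hi) (by omega)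
  simp [hvan a ha, hvan b hb, hvan c hc]

theorem hasLeadingTerm (hφ : IsPieriFamily φ) {j : ℤ × ℤ × ℤ} (hj : Admissible j) :
    HasLeadingTerm (φ j) (leadingExp j) := by
  induction hn : (coordSum j).toNat using Nat.strong_induction_on generalizing j with
  | _ n ih =>
    have ih' : ∀ i, coordSum i < coordSum j → Admissible i →
        HasLeadingTerm (φ i) (leadingExp i) := fun i hi hi' =>
      ih _ (by have := hi'.coordSum_nonneg; omega) hi' rfl
    obtain ⟨j1, j2, j3⟩ := j
    have hadm := (admissible_iff _ _ _).mp hj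
    by_cases hzero : j1 = 0 ∧ j2 = 0 ∧ j3 = 0
    · obtain ⟨rfl, rfl, rfl⟩ := hzero
      rw [hφ.init, show leadingExp (0, 0, 0) = 0 from rfl]
      exact ⟨by simp [Finsupp.single_apply], fun e _ hne => Finsupp.single_eq_of_ne' hne.symm⟩
    rcases (by omega : j3 + 2 ≤ j1 + j2 ∨ j2 + 2 ≤ j1 + j3 ∨ j1 + 2 ≤ j2 + j3) with h | h | h
    · have hj' : Admissible (j1 - 1, j2 - 1, j3) := (admissible_iff _ _ _).mpr (by omega)
      have hrule := hφ.pieri12 _ _ _ hj'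
      simp only [sub_add_cancel] at hrule
      refine hφ.hasLeadingTerm_of_rule (u := (1, 0, 0)) (Kc_one_one_ne_zero (by omega) (by omega)
        (by omega) (by omega)) rfl hj' ?_ ?_ ?_ ?_ ?_ ih' hrule
      all_goals simp only [leadingExp, coordSum, Prod.mk_add_mk, Prod.mk.injEq]; omega
    · have hj' : Admissible (j1 - 1, j2, j3 - 1) := (admissible_iff _ _ _).mpr (by omega)
      have hrule := hφ.pieri13 _ _ _ hj'
      simp only [sub_add_cancel] at hrule
      refine hφ.hasLeadingTerm_of_rule (u := (0, 1, 0)) (Kc_one_one_ne_zero (by omega) (by omega)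
        (by omega) (by omega)) rfl hj' ?_ ?_ ?_ ?_ ?_ ih' hrule
      all_goals simp only [leadingExp, coordSum, Prod.mk_add_mk, Prod.mk.injEq]; omega
    · have hj' : Admissible (j1, j2 - 1, j3 - 1) := (admissible_iff _ _ _).mpr (by omega)
      have hrule := hφ.pieri23 _ _ _ hj'
      simp only [sub_add_cancel] at hrule
      refine hφ.hasLeadingTerm_of_rule (u := (0, 0, 1)) (Kc_one_one_ne_zero (by omega) (by omega)
        (by omega) (by omega)) rfl hj' ?_ ?_ ?_ ?_ ?_ ih' hrule
      all_goals simp only [leadingExp, coordSum, Prod.mk_add_mk, Prod.mk.injEq]; omega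

end IsPieriFamily

/-- For a family satisfying the genus-two Pieri rule with
`φ_{0,0,0} = 1` and an admissible triple `(j1,j2,j3)`, with
`N = (j1+j2+j3)/2`, `d1 = (−j1+j2+j3)/2`, `d2 = (j1−j2+j3)/2`, `d3 = (j1+j2−j3)/2`,
the coefficient of `φ_{j1,j2,j3}` on `x12^{d3} x13^{d2} x23^{d1}` is a nonzero
constant `c`, and every other coefficient in total degree `≥ N` vanishes. -/
theorem genus_two_pieri_leading_term (φ : ℤ × ℤ × ℤ → LP) (hφ : IsPieriFamily φ)
    (j1 j2 j3 N d1 d2 d3 : ℤ) (hadm : Admissible (j1, j2, j3))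
    (hN : 2 * N = j1 + j2 + j3) (hd1 : 2 * d1 = -j1 + j2 + j3)
    (hd2 : 2 * d2 = j1 - j2 + j3) (hd3 : 2 * d3 = j1 + j2 - j3) :
    ∃ c : ℂ, c ≠ 0 ∧ φ (j1, j2, j3) (d3, d2, d1) = c ∧
      ∀ e : ℤ × ℤ × ℤ, N ≤ e.1 + e.2.1 + e.2.2 → e ≠ (d3, d2, d1) →
        φ (j1, j2, j3) e = 0 := by
  have hexp : leadingExp (j1, j2, j3) = (d3, d2, d1) := by
    simp only [leadingExp, Prod.mk.injEq]
    omega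
  obtain ⟨hlead, hvan⟩ := hφ.hasLeadingTerm hadm
  rw [hexp] at hlead hvan
  refine ⟨_, hlead, rfl, fun e he hne => hvan e ?_ hne⟩
  simp only [coordSum]
  omega
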